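/- For every finite simple graph G, |ker(G)| + |diadem(G)| ≤ 2·α(G). -/

import Mathlib

variable {V : Type*} [Fintype V] [DecidableEq V]

/-- `S` is an independent set of `G`. -/
def IsIndep (G : SimpleGraph V) (S : Set V) : Prop :=
  ∀ ⦃u⦄, u ∈ S → ∀ ⦃v⦄, v ∈ S → ¬ G.Adj u v

/-- The independence number `α(G)`: the maximum cardinality of an independent set. -/
noncomputable def indepNum (G : SimpleGraph V) : ℕ :=
  sSup {n : ℕ | ∃ S : Set V, IsIndep G S ∧ S.ncard = n}

/-- `S` is a maximum independent set of `G`. -/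
def IsMaxIndep (G : SimpleGraph V) (S : Set V) : Prop :=
  IsIndep G S ∧ ∀ T : Set V, IsIndep G T → T.ncard ≤ S.ncard

/-- The neighborhood `N(X)` of a set of vertices `X`. -/
def nbhdSet (G : SimpleGraph V) (X : Set V) : Set V :=
  {v | ∃ u ∈ X, G.Adj u v}

/-- The difference `d_G(X) = |X| - |N(X)|` of a vertex set `X`. -/
noncomputable def diffSet (G : SimpleGraph V) (X : Set V) : ℤ :=
  (X.ncard : ℤ) - ((nbhdSet G X).ncard : ℤ)

/-- `I` is a critical independent set of `G`. -/
def IsCriticalIndep (G : SimpleGraph V) (I : Set V) : Prop :=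
  IsIndep G I ∧ ∀ J : Set V, IsIndep G J → diffSet G J ≤ diffSet G I

/-- `I` is a maximum-cardinality critical independent set of `G`. -/
def IsMaxCriticalIndep (G : SimpleGraph V) (I : Set V) : Prop :=
  IsCriticalIndep G I ∧ ∀ J : Set V, IsCriticalIndep G J → J.ncard ≤ I.ncard

/-- `core(G)`: the intersection of all maximum independent sets of `G`. -/
def coreSet (G : SimpleGraph V) : Set V := ⋂₀ {S : Set V | IsMaxIndep G S}

/-- `corona(G)`: the union of all maximum independent sets of `G`. -/
def coronaSet (G : SimpleGraph V) : Set V := ⋃₀ {S : Set V | IsMaxIndep G S}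

/-- `ker(G)`: the intersection of all critical independent sets of `G`. -/
def kerSet (G : SimpleGraph V) : Set V := ⋂₀ {S : Set V | IsCriticalIndep G S}

/-- `diadem(G)`: the union of all critical independent sets of `G`. -/
def diademSet (G : SimpleGraph V) : Set V := ⋃₀ {S : Set V | IsCriticalIndep G S}

/-- `nucleus(G)`: the intersection of all maximum-cardinality critical independent
sets of `G`. -/
def nucleusSet (G : SimpleGraph V) : Set V := ⋂₀ {S : Set V | IsMaxCriticalIndep G S}

/-- `C` is the vertex set of some odd cycle of `G`. -/
def IsOddCycleVertexSet (G : SimpleGraph V) (C : Set V) : Prop :=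
  ∃ (v : V) (w : G.Walk v v), w.IsCycle ∧ Odd w.length ∧ {x | x ∈ w.support} = C

/-- The maximum cardinality of a set of pairwise vertex-distinct odd cycles of `G`,
i.e. the number of distinct vertex sets of odd cycles of `G`. -/
noncomputable def numVertexDistinctOddCycles (G : SimpleGraph V) : ℕ :=
  {C : Set V | IsOddCycleVertexSet G C}.ncard

/-- `E` is the edge set of some odd cycle of `G`. -/
def IsOddCycleEdgeSet (G : SimpleGraph V) (E : Set (Sym2 V)) : Prop :=
  ∃ (v : V) (w : G.Walk v v), w.IsCycle ∧ Odd w.length ∧ {e | e ∈ w.edges} = E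

/-- The number of (distinct) odd cycles of `G`, where a cycle is identified with
its edge set. -/
noncomputable def numOddCycles (G : SimpleGraph V) : ℕ :=
  {E : Set (Sym2 V) | IsOddCycleEdgeSet G E}.ncard


/-!
Let `A` be a critical independent set of maximum size. Since `d_G` is supermodular, for
any critical independent set `J` the independent set `(A ∪ J) \ N(A ∪ J)` is critical, and
so is its union with `A`; maximality of `A` then forces `J ⊆ A ∪ N(A)`. The diadem is thus
covered by `A` and the part of `N(A)` outside `N(ker G)`, while `ker G ⊆ A` gives
`|ker G| - |N(ker G)| ≤ |A| - |N(A)|`. Adding up, `|ker G| + |diadem G| ≤ 2|A| ≤ 2α(G)`.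
-/

section CriticalIndependence

variable {V : Type*} {G : SimpleGraph V}

lemma nbhdSet_mono {X Y : Set V} (h : X ⊆ Y) : nbhdSet G X ⊆ nbhdSet G Y :=
  fun _ ⟨u, hu, huv⟩ => ⟨u, h hu, huv⟩

lemma nbhdSet_union (X Y : Set V) : nbhdSet G (X ∪ Y) = nbhdSet G X ∪ nbhdSet G Y := by
  ext v
  simp only [nbhdSet, Set.mem_union, Set.mem_ofPred_eq, or_and_right, exists_or]

lemma IsIndep.mono {X Y : Set V} (hY : IsIndep G Y) (h : X ⊆ Y) : IsIndep G X :=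
  fun _ hu _ hv => hY (h hu) (h hv)

lemma isIndep_sdiff_nbhdSet (X : Set V) : IsIndep G (X \ nbhdSet G X) :=
  fun _ hu _ hv huv => hv.2 ⟨_, hu.1, huv⟩

lemma disjoint_diademSet_nbhdSet_kerSet :
    Disjoint (diademSet G) (nbhdSet G (kerSet G)) := by
  rw [Set.disjoint_left]
  rintro v ⟨J, hJ, hvJ⟩ ⟨k, hk, hkv⟩
  exact hJ.1 (Set.sInter_subset_of_mem hJ hk) hvJ hkv

variable [Finite V]

lemma IsIndep.ncard_le_indepNum {S : Set V} (hS : IsIndep G S) : S.ncard ≤ indepNum G :=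
  le_csSup ⟨Nat.card V, by rintro _ ⟨T, -, rfl⟩; exact Set.ncard_le_card T⟩ ⟨S, hS, rfl⟩

lemma diffSet_add_diffSet_le_diffSet_union_add_diffSet_inter (X Y : Set V) :
    diffSet G X + diffSet G Y ≤ diffSet G (X ∪ Y) + diffSet G (X ∩ Y) := by
  have hX := Set.ncard_union_add_ncard_inter X Y
  have hN := Set.ncard_union_add_ncard_inter (nbhdSet G X) (nbhdSet G Y)
  have hNinter : (nbhdSet G (X ∩ Y)).ncard ≤ (nbhdSet G X ∩ nbhdSet G Y).ncard :=
    Set.ncard_le_ncard <| Set.subset_inter (nbhdSet_mono Set.inter_subset_left)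
      (nbhdSet_mono Set.inter_subset_right)
  rw [← nbhdSet_union] at hN
  simp only [diffSet]
  omega

/-- Removing `S = X ∩ N(X)` lowers `|X|` by `|S|` and `|N(X)|` by at least `|S|`. -/
lemma diffSet_le_diffSet_sdiff_nbhdSet (X : Set V) :
    diffSet G X ≤ diffSet G (X \ nbhdSet G X) := by
  have hsdiff : X \ nbhdSet G X = X \ (X ∩ nbhdSet G X) := Set.sdiff_self_inter.symm
  have hNsub : nbhdSet G (X \ (X ∩ nbhdSet G X)) ⊆ nbhdSet G X \ (X ∩ nbhdSet G X) := by
    rintro v ⟨u, hu, huv⟩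
    exact ⟨⟨u, hu.1, huv⟩, fun hv => hu.2 ⟨hu.1, v, hv.1, huv.symm⟩⟩
  have hX := Set.ncard_sdiff_add_ncard_of_subset (s := X ∩ nbhdSet G X) Set.inter_subset_left
  have hN := Set.ncard_sdiff_add_ncard_of_subset (s := X ∩ nbhdSet G X) Set.inter_subset_right
  have hNle := Set.ncard_le_ncard hNsub
  rw [hsdiff]
  simp only [diffSet]
  omega

lemma IsCriticalIndep.diffSet_le_diffSet_union {A : Set V} (hA : IsCriticalIndep G A)
    (X : Set V) : diffSet G X ≤ diffSet G (A ∪ X) := by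
  have hsuper := diffSet_add_diffSet_le_diffSet_union_add_diffSet_inter (G := G) A X
  have hinter := hA.2 (A ∩ X) (hA.1.mono Set.inter_subset_left)
  omega

lemma IsCriticalIndep.union {A B : Set V} (hA : IsCriticalIndep G A)
    (hB : IsCriticalIndep G B) (hAB : IsIndep G (A ∪ B)) : IsCriticalIndep G (A ∪ B) :=
  ⟨hAB, fun J hJ => (hB.2 J hJ).trans (hA.diffSet_le_diffSet_union B)⟩

lemma exists_isMaxCriticalIndep (G : SimpleGraph V) : ∃ A, IsMaxCriticalIndep G A := by
  obtain ⟨I, hI, hImax⟩ := Set.exists_max_image {S : Set V | IsIndep G S} (diffSet G)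
    (Set.toFinite _) ⟨∅, fun _ h => h.elim⟩
  obtain ⟨A, hA, hAmax⟩ := Set.exists_max_image {S : Set V | IsCriticalIndep G S} Set.ncard
    (Set.toFinite _) ⟨I, hI, hImax⟩
  exact ⟨A, hA, hAmax⟩

lemma IsMaxCriticalIndep.subset_union_nbhdSet {A J : Set V} (hA : IsMaxCriticalIndep G A)
    (hJ : IsCriticalIndep G J) : J ⊆ A ∪ nbhdSet G A := by
  set Z := (A ∪ J) \ nbhdSet G (A ∪ J)
  have hZ : IsCriticalIndep G Z :=
    ⟨isIndep_sdiff_nbhdSet _, fun I hI => (hJ.2 I hI).trans <|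
      (hA.1.diffSet_le_diffSet_union J).trans (diffSet_le_diffSet_sdiff_nbhdSet _)⟩
  have hZA : IsIndep G (Z ∪ A) := by
    rintro u (hu | hu) v (hv | hv) huv
    · exact hZ.1 hu hv huv
    · exact hu.2 ⟨v, Or.inl hv, huv.symm⟩
    · exact hv.2 ⟨u, Or.inl hu, huv⟩
    · exact hA.1.1 hu hv huv
  have hZsubA : Z ⊆ A := Set.union_eq_right.mp <| Eq.symm <|
    Set.eq_of_subset_of_ncard_le Set.subset_union_right (hA.2 _ (hZ.union hA.1 hZA))
  intro x hxJ
  by_contra hx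
  simp only [Set.mem_union, not_or] at hx
  refine hx.1 (hZsubA ⟨Or.inr hxJ, ?_⟩)
  rw [nbhdSet_union]
  rintro (hxN | ⟨u, hu, hux⟩)
  exacts [hx.2 hxN, hJ.1 hu hxJ hux]

lemma IsMaxCriticalIndep.diademSet_subset {A : Set V} (hA : IsMaxCriticalIndep G A) :
    diademSet G ⊆ A ∪ (nbhdSet G A \ nbhdSet G (kerSet G)) := by
  rintro v ⟨J, hJ, hvJ⟩
  rcases hA.subset_union_nbhdSet hJ hvJ with hvA | hvN
  · exact Or.inl hvA
  · exact Or.inr ⟨hvN, Set.disjoint_left.mp disjoint_diademSet_nbhdSet_kerSet ⟨J, hJ, hvJ⟩⟩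

end CriticalIndependence

/-- For every finite simple graph `G`,
`|ker(G)| + |diadem(G)| ≤ 2·α(G)`. -/
theorem ker_diadem_le_two_alpha (G : SimpleGraph V) :
    (kerSet G).ncard + (diademSet G).ncard ≤ 2 * indepNum G := by
  obtain ⟨A, hA⟩ := exists_isMaxCriticalIndep G
  have hKA : kerSet G ⊆ A := Set.sInter_subset_of_mem hA.1
  have hdiff : diffSet G (kerSet G) ≤ diffSet G A := hA.1.2 _ (hA.1.1.mono hKA)
  have hN := Set.ncard_sdiff_add_ncard_of_subset (nbhdSet_mono (G := G) hKA)
  have hD : (diademSet G).ncard ≤ A.ncard + (nbhdSet G A \ nbhdSet G (kerSet G)).ncard :=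
    (Set.ncard_le_ncard hA.diademSet_subset).trans (Set.ncard_union_le _ _)
  have hα := hA.1.1.ncard_le_indepNum
  simp only [diffSet] at hdiff
  omega
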